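/- arXiv:1109.3397 — 2 statements merged into one kernel-verified Lean document; each statement's English description precedes it below -/
import Mathlib

section
/- Geometric cone construction (Step 1): Let θ₀ = arctan(1/M₀), s = (5 + sinθ₀ + √(sin²θ₀ + 30sinθ₀ + 25))/(2sinθ₀), χ = s·sinθ₀/5, and θ₁ = arcsin(1/s). Then for every ρ with 0 < ρ ≤ 1/(16s) and every x ∈ Ω satisfying sρ < dist(x,∂Ω) ≤ 1/4, there exists a point x̃ ∈ Ω such that: (i) B_{5χρ}(x) ⊂ C(x̃, (x−x̃)/|x−x̃|, θ₀) ∩ B_{1/8}(x̃) ⊂ Ω; and (ii) the discs B_ρ(x) and B_{χρ}(x₂) are internally tangent to the cone C(x̃, (x−x̃)/|x−x̃|, θ₁), where x₂ = x + (χ+1)ρ·(x−x̃)/|x−x̃|. -/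
noncomputable section

open MeasureTheory Metric Set
open scoped ENNReal NNReal Topology

abbrev E2 : Type := EuclideanSpace ℝ (Fin 2)
abbrev Mat2 : Type := Matrix (Fin 2) (Fin 2) ℝ
abbrev Tensor4 : Type := Fin 2 → Fin 2 → Fin 2 → Fin 2 → ℝ

/-- `(𝕃 A)·B = L_{ijkl} A_{kl} B_{ij}`. -/
def tContract (L : Tensor4) (A B : Mat2) : ℝ :=
  ∑ i, ∑ j, ∑ k, ∑ l, L i j k l * A k l * B i j

/-- Squared Frobenius norm of a 2×2 matrix. -/
def mnorm2 (A : Mat2) : ℝ := ∑ i, ∑ j, A i j ^ 2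

/-- Symmetries `C_{ijkl} = C_{klij} = C_{lkij}`. -/
def SymTensor (L : Tensor4) : Prop :=
  ∀ i j k l, L i j k l = L k l i j ∧ L i j k l = L l k i j

/-- canonical basis vector -/
def e2 (i : Fin 2) : E2 := EuclideanSpace.single i 1

/-- Hessian matrix `∇²w(x)`. -/
def hess (w : E2 → ℝ) (x : E2) : Mat2 := fun i j =>
  iteratedFDeriv ℝ 2 w x ![e2 i, e2 j]

/-- components of the gradient -/
def grad (w : E2 → ℝ) (x : E2) (i : Fin 2) : ℝ := fderiv ℝ w x (e2 i)

/-- membership in `H²(Ω)` -/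
def MemH2 (Ω : Set E2) (w : E2 → ℝ) : Prop :=
  IntegrableOn (fun x => w x ^ 2) Ω volume ∧
  IntegrableOn (fun x => ‖fderiv ℝ w x‖ ^ 2) Ω volume ∧
  IntegrableOn (fun x => mnorm2 (hess w x)) Ω volume

/-- membership in `H³(Ω)` -/
def MemH3 (Ω : Set E2) (w : E2 → ℝ) : Prop :=
  MemH2 Ω w ∧ IntegrableOn (fun x => ‖iteratedFDeriv ℝ 3 w x‖ ^ 2) Ω volume

/-- `∂Ω` is of class `C^{k,1}` with constants `ρ₀`, `M₀` (Definition 2.1). -/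
def CkOneBoundary (k : ℕ) (Ω : Set E2) (ρ₀ M₀ : ℝ) : Prop :=
  ∀ P ∈ frontier Ω, ∃ f : E2 ≃ᵢ E2, ∃ ψ : ℝ → ℝ,
    f P = 0 ∧
    (f '' Ω) ∩ ball (0 : E2) ρ₀ =
      {y ∈ ball (0 : E2) ρ₀ | ψ ((inner ℝ y (e2 0) : ℝ)) < (inner ℝ y (e2 1) : ℝ)} ∧
    ψ 0 = 0 ∧ (1 ≤ k → deriv ψ 0 = 0) ∧
    ContDiffOn ℝ k ψ (Ioo (-ρ₀) ρ₀) ∧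
    ∃ (L : ℝ≥0) (b : ℕ → ℝ),
      LipschitzOnWith L (iteratedDeriv k ψ) (Ioo (-ρ₀) ρ₀) ∧
      (∀ m ∈ Finset.range (k + 1), ∀ t ∈ Ioo (-ρ₀) ρ₀, |iteratedDeriv m ψ t| ≤ b m) ∧
      (∑ m ∈ Finset.range (k + 1), ρ₀ ^ m * b m) + ρ₀ ^ (k + 1) * (L : ℝ) ≤ M₀ * ρ₀

/-- `Ω_r = {x ∈ Ω : dist(x,∂Ω) > r}` (and `D_t` for the inclusion). -/
def innerPart (A : Set E2) (r : ℝ) : Set E2 := {x ∈ A | r < infDist x (frontier A)}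

/-- Boundary data: the couple field `M̂`, its bending and twisting components
`M̂_n`, `M̂_τ`, and the outer unit normal and tangent fields on `∂Ω`. -/
structure BData where
  M : E2 → E2
  Mn : E2 → ℝ
  Mτ : E2 → ℝ
  nv : E2 → E2
  tv : E2 → E2

/-- geometric compatibility of the normal and tangent fields: `n` is unit and `τ = e₃ × n`. -/
def BData.Geom (bd : BData) (Ω : Set E2) : Prop :=
  (∀ x ∈ frontier Ω, ‖bd.nv x‖ = 1) ∧
  (∀ x ∈ frontier Ω,
    (inner ℝ (bd.tv x) (e2 0) : ℝ) = -(inner ℝ (bd.nv x) (e2 1) : ℝ) ∧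
    (inner ℝ (bd.tv x) (e2 1) : ℝ) = (inner ℝ (bd.nv x) (e2 0) : ℝ))

/-- the plate tensor `P = (h³/12) C` -/
def plateT (h : ℝ) (Cc : E2 → Tensor4) : E2 → Tensor4 :=
  fun x i j k l => h ^ 3 / 12 * Cc x i j k l

/-- Weak solution of the Neumann problem
`div div (P ∇²w) = 0` in `Ω`, `(P∇²w)n·n = -M̂_n`,
`div(P∇²w)·n + ((P∇²w)n·τ),ₛ = (M̂_τ),ₛ` on `∂Ω`:
for every test function `v`,
`∫_Ω P∇²w·∇²v = ∫_∂Ω (M̂_τ v,ₛ - M̂_n v,ₙ) = -∫_∂Ω ((M̂_τ),ₛ v + M̂_n v,ₙ)`. -/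
def IsNeumannSol (Pt : E2 → Tensor4) (Ω : Set E2) (bd : BData) (w : E2 → ℝ) : Prop :=
  MemH2 Ω w ∧
  ∀ v : E2 → ℝ, ContDiff ℝ 2 v →
    ∫ x in Ω, tContract (Pt x) (hess w x) (hess v x) =
      ∫ x in frontier Ω,
        (bd.Mτ x * fderiv ℝ v x (bd.tv x) - bd.Mn x * fderiv ℝ v x (bd.nv x)) ∂μH[1]

/-- Weak solution of `div div (P ∇²u) = 0` in the interior of `Ω`. -/
def IsInteriorSol (Pt : E2 → Tensor4) (Ω : Set E2) (u : E2 → ℝ) : Prop :=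
  MemH2 Ω u ∧
  ∀ v : E2 → ℝ, ContDiff ℝ (⊤ : ℕ∞) v → HasCompactSupport v → tsupport v ⊆ Ω →
    ∫ x in Ω, tContract (Pt x) (hess u x) (hess v x) = 0

/-- The work `W = -∫_∂Ω (M̂_{τ,s} w + M̂_n w,ₙ) = ∫_∂Ω (M̂_τ w,ₛ - M̂_n w,ₙ)`. -/
def work (Ω : Set E2) (bd : BData) (w : E2 → ℝ) : ℝ :=
  ∫ x in frontier Ω,
    (bd.Mτ x * fderiv ℝ w x (bd.tv x) - bd.Mn x * fderiv ℝ w x (bd.nv x)) ∂μH[1]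

/-- normalization conditions `∫_Ω w = 0`, `∫_Ω w,_α = 0` -/
def Normalized (Ω : Set E2) (w : E2 → ℝ) : Prop :=
  (∫ x in Ω, w x) = 0 ∧ ∀ α : Fin 2, (∫ x in Ω, grad w x α) = 0

/-- (dimensionally normalized) `L²(∂Ω)` norm -/
def bL2 (Ω : Set E2) (ρ₀ : ℝ) (g : E2 → E2) : ℝ :=
  Real.sqrt (ρ₀⁻¹ * ∫ x in frontier Ω, ‖g x‖ ^ 2 ∂μH[1])

/-- (dimensionally normalized) `H^{1/2}(∂Ω)` norm (Gagliardo seminorm form) -/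
def bHhalf (Ω : Set E2) (ρ₀ : ℝ) (g : E2 → E2) : ℝ :=
  Real.sqrt (ρ₀⁻¹ * (∫ x in frontier Ω, ‖g x‖ ^ 2 ∂μH[1]) +
    ∫ x in frontier Ω, (∫ y in frontier Ω, ‖g x - g y‖ ^ 2 / ‖x - y‖ ^ 2 ∂μH[1]) ∂μH[1])

/-- `H^{-1/2}(∂Ω)` norm, by duality with `H^{1/2}(∂Ω)` -/
def bHmhalf (Ω : Set E2) (ρ₀ : ℝ) (g : E2 → E2) : ℝ :=
  sSup {r : ℝ | ∃ φ : E2 → E2, ContDiff ℝ 2 φ ∧ bHhalf Ω ρ₀ φ ≤ 1 ∧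
    r = ρ₀⁻¹ * ∫ x in frontier Ω, (inner ℝ (g x) (φ x) : ℝ) ∂μH[1]}

/-- `M̂ ∈ L²(∂Ω, ℝ²)` -/
def MemL2bd (Ω : Set E2) (g : E2 → E2) : Prop :=
  Integrable (fun x => ‖g x‖ ^ 2) ((μH[1] : Measure E2).restrict (frontier Ω))

/-- `M̂ ∈ H^{-1/2}(∂Ω, ℝ²)` -/
def MemHmhalf (Ω : Set E2) (ρ₀ : ℝ) (g : E2 → E2) : Prop :=
  ∃ K : ℝ, ∀ φ : E2 → E2, ContDiff ℝ 2 φ →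
    |ρ₀⁻¹ * ∫ x in frontier Ω, (inner ℝ (g x) (φ x) : ℝ) ∂μH[1]| ≤ K * bHhalf Ω ρ₀ φ

/-- ellipticity (strong convexity): `C A·A ≥ γ|A|²` a.e. in `Ω` -/
def TensorElliptic (Cc : E2 → Tensor4) (Ω : Set E2) (γ : ℝ) : Prop :=
  ∀ᵐ x ∂(volume.restrict Ω), ∀ A : Mat2, A.IsSymm → γ * mnorm2 A ≤ tContract (Cc x) A A

/-- the `C^{1,1}` bound `Σ_{ijkl} Σ_{m=0}^2 ρ₀^m ‖∇^m C_{ijkl}‖_{L^∞(ℝ²)} ≤ M` -/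
def TensorRegBound (Cc : E2 → Tensor4) (ρ₀ M : ℝ) : Prop :=
  ∃ b : Fin 2 → Fin 2 → Fin 2 → Fin 2 → ℕ → ℝ,
    (∀ i j k l, ∀ m ∈ Finset.range 3, ∀ x : E2,
      ‖iteratedFDeriv ℝ m (fun y => Cc y i j k l) x‖ ≤ b i j k l m) ∧
    (∑ i, ∑ j, ∑ k, ∑ l, ∑ m ∈ Finset.range 3, ρ₀ ^ m * b i j k l m) ≤ M

/-- the 7×7 matrix `S(x)` of (3.12) -/
def dichS (L : Tensor4) : Matrix (Fin 7) (Fin 7) ℝ :=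
  let a0 := L 0 0 0 0
  let a1 := 4 * L 0 0 0 1
  let a2 := 2 * L 0 0 1 1 + 4 * L 0 1 0 1
  let a3 := 4 * L 1 1 0 1
  let a4 := L 1 1 1 1
  Matrix.of
    ![![a0, a1, a2, a3, a4, 0, 0],
      ![0, a0, a1, a2, a3, a4, 0],
      ![0, 0, a0, a1, a2, a3, a4],
      ![4 * a0, 3 * a1, 2 * a2, a3, 0, 0, 0],
      ![0, 4 * a0, 3 * a1, 2 * a2, a3, 0, 0],
      ![0, 0, 4 * a0, 3 * a1, 2 * a2, a3, 0],
      ![0, 0, 0, 4 * a0, 3 * a1, 2 * a2, a3]]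

/-- `𝒟(x) = |det S(x)| / a₀` -/
def dichD (Cc : E2 → Tensor4) (x : E2) : ℝ := |(dichS (Cc x)).det| / Cc x 0 0 0 0

/-- dichotomy condition: either `𝒟 > 0` everywhere (and `μ = min 𝒟`), or `𝒟 ≡ 0` -/
def DichotomyCond (Cc : E2 → Tensor4) (μ : ℝ) : Prop :=
  ((∀ x : E2, 0 < dichD Cc x) ∧ IsLeast (Set.range (dichD Cc)) μ) ∨
    (∀ x : E2, dichD Cc x = 0)

/-- stiff jump condition `η₀ C ≤ C̃ - C ≤ (η₁-1) C` a.e. in `Ω` -/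
def JumpStiff (Cc Ct : E2 → Tensor4) (Ω : Set E2) (η₀ η₁ : ℝ) : Prop :=
  ∀ᵐ x ∂(volume.restrict Ω), ∀ A : Mat2, A.IsSymm →
    η₀ * tContract (Cc x) A A ≤ tContract (Ct x) A A - tContract (Cc x) A A ∧
    tContract (Ct x) A A - tContract (Cc x) A A ≤ (η₁ - 1) * tContract (Cc x) A A

/-- soft jump condition `-(1-η₁) C ≤ C̃ - C ≤ -η₀ C` a.e. in `Ω` -/
def JumpSoft (Cc Ct : E2 → Tensor4) (Ω : Set E2) (η₀ η₁ : ℝ) : Prop :=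
  ∀ᵐ x ∂(volume.restrict Ω), ∀ A : Mat2, A.IsSymm →
    -(1 - η₁) * tContract (Cc x) A A ≤ tContract (Ct x) A A - tContract (Cc x) A A ∧
    tContract (Ct x) A A - tContract (Cc x) A A ≤ -η₀ * tContract (Cc x) A A

/-- `L^∞` bound for a tensor field on `Ω` -/
def TensorLinfty (Ct : E2 → Tensor4) (Ω : Set E2) : Prop :=
  ∃ K : ℝ, ∀ᵐ x ∂(volume.restrict Ω), ∀ i j k l, |Ct x i j k l| ≤ K

/-- `Γ` is an open subarc of `∂Ω` -/
def OpenSubarc (Γ Ω : Set E2) : Prop :=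
  Γ ⊆ frontier Ω ∧ IsConnected Γ ∧ ∃ U : Set E2, IsOpen U ∧ Γ = U ∩ frontier Ω

/-- open cone of vertex `z`, axis `ξ` and half-aperture `θ` -/
def cone (z ξ : E2) (θ : ℝ) : Set E2 :=
  {x : E2 | Real.cos θ * ‖x - z‖ < (inner ℝ ξ (x - z) : ℝ)}

/-- a disc internally tangent to the cone `C(z,ξ,θ)` (center on the axis) -/
def InternallyTangentCone (c : E2) (r : ℝ) (z ξ : E2) (θ : ℝ) : Prop :=
  ball c r ⊆ cone z ξ θ ∧ r = Real.sin θ * ‖c - z‖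

/-- the centers `x_k` of the chain of discs (`k ≥ 1`), `x₁ = x`,
`x_k = x_{k-1} + (r_{k-1} + r_k) ξ`, `r_k = χ^{k-1} ρ`. -/
def chainPt (x ξ : E2) (ρ χ : ℝ) (k : ℕ) : E2 :=
  x + (ρ * (χ + 1) * (χ ^ (k - 1) - 1) / (χ - 1)) • ξ

/-- the number `k(ρ)` of (5.12) -/
def kOfρ (χ s h₀ ρ : ℝ) : ℤ :=
  ⌊Real.log ((χ - 1) / (6 * χ - 4) * (h₀ / (8 * ρ) - s + 1 + 2 / (χ - 1))) / Real.log χ⌋ + 1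

/-- normalized `H²(Ω)` norm -/
def nH2 (Ω : Set E2) (ρ₀ : ℝ) (w : E2 → ℝ) : ℝ :=
  ρ₀⁻¹ * Real.sqrt ((∫ x in Ω, w x ^ 2) + ρ₀ ^ 2 * (∫ x in Ω, ‖fderiv ℝ w x‖ ^ 2) +
    ρ₀ ^ 4 * ∫ x in Ω, mnorm2 (hess w x))

/-- normalized `H³(Ω)` norm -/
def nH3 (Ω : Set E2) (ρ₀ : ℝ) (w : E2 → ℝ) : ℝ :=
  ρ₀⁻¹ * Real.sqrt ((∫ x in Ω, w x ^ 2) + ρ₀ ^ 2 * (∫ x in Ω, ‖fderiv ℝ w x‖ ^ 2) +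
    ρ₀ ^ 4 * (∫ x in Ω, mnorm2 (hess w x)) +
    ρ₀ ^ 6 * ∫ x in Ω, ‖iteratedFDeriv ℝ 3 w x‖ ^ 2)

/-- normalized `H^{5/2}(Ω)` norm (Gagliardo seminorm of the Hessian) -/
def nH52 (Ω : Set E2) (ρ₀ : ℝ) (w : E2 → ℝ) : ℝ :=
  ρ₀⁻¹ * Real.sqrt ((∫ x in Ω, w x ^ 2) + ρ₀ ^ 2 * (∫ x in Ω, ‖fderiv ℝ w x‖ ^ 2) +
    ρ₀ ^ 4 * (∫ x in Ω, mnorm2 (hess w x)) +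
    ρ₀ ^ 5 * ∫ x in Ω, (∫ y in Ω, mnorm2 (hess w x - hess w y) / ‖x - y‖ ^ 3))


set_option maxHeartbeats 1000000
-- arithmetic helper lemmas with minimal context
lemma arithA {R t : ℝ} (hR2 : R^2 = t^2 + 30*t + 25) (hR0 : 0 ≤ R) (ht : 0 < t) : 5 ≤ R := by
  nlinarith

lemma arithB {s t R : ℝ} (hst : s * (2*t) = 5 + t + R) (ht : 0 < t) (ht1 : t ≤ 1)
    (hR5 : 5 ≤ R) : 2 ≤ s := by nlinarith

lemma arithC {s t R : ℝ} (ht : 0 < t) (hst : s * (2*t) = 5 + t + R)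
    (hR2 : R^2 = t^2 + 30*t + 25) (hR5 : 5 ≤ R) (hs2 : 2 ≤ s) :
    s * (s*t) - (s*t) - 5*s = 5 := by
  have h1 : s * R = 2*(s*(s*t)) - 5*s - s*t := by linear_combination (-s) * hst
  have h2 : (s*R)^2 = s^2 * (t^2 + 30*t + 25) := by linear_combination s^2 * hR2
  nlinarith [mul_pos ht ht, sq_nonneg (s*t), mul_le_mul hs2 hR5 (by norm_num : (0:ℝ) ≤ 5) (by linarith : (0:ℝ) ≤ s)]

lemma arithD {a b d : ℝ} (hd : 0 ≤ d) (h : a^2 + b^2 = d^2) : |b| ≤ d := by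
  nlinarith [sq_abs b, abs_nonneg b, sq_nonneg a]

lemma arithE {N u v : ℝ} (hN : 0 ≤ N) (h : N^2 = u^2 + v^2) (hu : |u| ≤ 1/2)
    (hv : |v| ≤ |u|/2) : N < 1 := by
  nlinarith [sq_abs u, sq_abs v, abs_nonneg u, abs_nonneg v]

lemma arithF {M₀ d X0 X1 u ψu : ℝ} (hM₀ : 0 < M₀)
    (hX1 : |X1| ≤ 1/4) (hψu : |ψu| ≤ M₀ * u^2) (hψu2 : |ψu| ≤ |u|/2)
    (hsq : X0^2 + X1^2 = d^2)
    (hdsq : d^2 ≤ (X0 - u)^2 + (X1 - ψu)^2) :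
    2 * X0 * u ≤ (2 + M₀) * u^2 := by
  have habs : |X1 * ψu| ≤ (1/4) * (M₀ * u^2) := by
    rw [abs_mul]
    apply mul_le_mul hX1 hψu (abs_nonneg _) (by norm_num)
  have h2 : -((1/4) * (M₀ * u^2)) ≤ X1 * ψu := by
    have := neg_abs_le (X1 * ψu); linarith
  have h3 : ψu^2 ≤ u^2/4 := by nlinarith [abs_nonneg ψu, sq_abs ψu, sq_abs u, abs_nonneg u]
  nlinarith [sq_nonneg u]

lemma arithG {X0 u C : ℝ} (hu : 0 < u) (hC : 0 < C) (h1 : 2*X0*u ≤ C*u^2)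
    (h2 : 2*X0*(-u) ≤ C*(-u)^2) (h3 : C*u ≤ |X0|) (h4 : X0 ≠ 0) : False := by
  rcases abs_cases X0 with ⟨he, -⟩|⟨he, -⟩ <;>
    nlinarith [mul_le_mul_of_nonneg_right h3 hu.le, mul_pos hC (mul_pos hu hu)]

lemma arithH {M t u h : ℝ} (ht : 0 < t) (hh : 0 < h) (hM : 0 < M)
    (hcone : (M*t)^2 * (u^2 + h^2) < h^2) (hpyth : t^2 + (M*t)^2 = 1) :
    M * |u| < h := by
  have e2 : M^2 * u^2 < h^2 := by nlinarith [mul_pos ht ht]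
  nlinarith [abs_nonneg u, sq_abs u]

lemma arithI {u h N : ℝ} (hN : 0 ≤ N) (hsq : N^2 = u^2 + h^2) : |u| ≤ N := by
  nlinarith [sq_abs u, abs_nonneg u, sq_nonneg h]

lemma arithJ {M u : ℝ} (hM : 0 < M) (hu : |u| ≤ 1) : M * u^2 ≤ M * |u| := by
  have h1 : u^2 ≤ |u| := by
    have h := mul_le_mul_of_nonneg_left hu (abs_nonneg u)
    calc u^2 = |u| * |u| := by rw [abs_mul_abs_self]; ring
    _ ≤ |u| := by rw [mul_one] at h; exact h
  exact mul_le_mul_of_nonneg_left h1 hM.le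

lemma arithK {a b : ℝ} (ha : 0 ≤ a) (h : a < b) : a^2 < b^2 := by nlinarith


lemma eq_of_sq_eq_sq'' {a b : ℝ} (ha : 0 ≤ a) (hb : 0 < b) (h : a^2 = b^2) : a = b := by
  rcases mul_eq_zero.1 (show (a - b) * (a + b) = 0 by linear_combination h) with h'|h'
  · linarith
  · linarith

lemma isom_inner (f : E2 ≃ᵢ E2) (a b c : E2) :
    (inner ℝ (f a - f b) (f c - f b) : ℝ) = (inner ℝ (a - b) (c - b) : ℝ) := by
  have key : ∀ u v : E2, (inner ℝ u v : ℝ) = (‖u‖^2 + ‖v‖^2 - ‖u - v‖^2)/2 := by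
    intro u v; have := norm_sub_sq_real u v; linarith
  rw [key, key]
  have h1 : ‖f a - f b‖ = ‖a - b‖ := by
    rw [← dist_eq_norm, ← dist_eq_norm, f.isometry.dist_eq]
  have h2 : ‖f c - f b‖ = ‖c - b‖ := by
    rw [← dist_eq_norm, ← dist_eq_norm, f.isometry.dist_eq]
  have h3 : f a - f b - (f c - f b) = f a - f c := by abel
  have h4 : a - b - (c - b) = a - c := by abel
  have h5 : ‖f a - f c‖ = ‖a - c‖ := by
    rw [← dist_eq_norm, ← dist_eq_norm, f.isometry.dist_eq]
  rw [h3, h4, h1, h2, h5]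

lemma ball_subset_cone (z ξ : E2) (hξ : ‖ξ‖ = 1) {θ D r : ℝ} (hD : 0 < D)
    (hcos : 0 ≤ Real.cos θ) (hr : r ≤ D * Real.sin θ) :
    ball (z + D • ξ) r ⊆ cone z ξ θ := by
  intro y hy
  rw [mem_ball, dist_eq_norm] at hy
  have hyz : y - (z + D • ξ) = (y - z) - D • ξ := by abel
  rw [hyz] at hy
  have hr0 : 0 < r := lt_of_le_of_lt (norm_nonneg _) hy
  have h1 : ‖(y - z) - D • ξ‖^2 < (D * Real.sin θ)^2 := by
    nlinarith [norm_nonneg ((y - z) - D • ξ)]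
  have h2 : ‖(y - z) - D • ξ‖^2 =
      ‖y - z‖^2 - 2*(D * (inner ℝ ξ (y - z) : ℝ)) + D^2 := by
    rw [norm_sub_sq_real, real_inner_smul_right, norm_smul, real_inner_comm]
    simp [hξ, abs_of_pos hD]
    try ring
  have hpyth := Real.sin_sq_add_cos_sq θ
  have hge : (0:ℝ) ≤ (‖y - z‖ - D * Real.cos θ)^2 := sq_nonneg _
  show Real.cos θ * ‖y - z‖ < (inner ℝ ξ (y - z) : ℝ)
  nlinarith [norm_nonneg (y - z)]

lemma norm_sq_coord (y : E2) : ‖y‖^2 = y 0^2 + y 1^2 := by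
  rw [EuclideanSpace.norm_eq, Real.sq_sqrt (by positivity), Fin.sum_univ_two,
    Real.norm_eq_abs, Real.norm_eq_abs, sq_abs, sq_abs]

lemma psi_bound {M₀ : ℝ} (ψ : ℝ → ℝ) (hψ0 : ψ 0 = 0) (hψ'0 : deriv ψ 0 = 0)
    (hC : ContDiffOn ℝ 2 ψ (Ioo (-1:ℝ) 1))
    (hb : ∀ t ∈ Ioo (-1:ℝ) 1, |iteratedDeriv 2 ψ t| ≤ M₀) :
    ∀ u ∈ Ioo (-1:ℝ) 1, |ψ u| ≤ M₀ * u^2 := by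
  have hopen : IsOpen (Ioo (-1:ℝ) 1) := isOpen_Ioo
  have hd1 : ContDiffOn ℝ 1 (deriv ψ) (Ioo (-1:ℝ) 1) :=
    hC.deriv_of_isOpen hopen (by norm_num)
  have hdiff : DifferentiableOn ℝ ψ (Ioo (-1:ℝ) 1) :=
    hC.differentiableOn (by norm_num)
  have hdiff' : DifferentiableOn ℝ (deriv ψ) (Ioo (-1:ℝ) 1) :=
    hd1.differentiableOn one_ne_zero
  have hit : ∀ t : ℝ, iteratedDeriv 2 ψ t = deriv (deriv ψ) t := by
    intro t
    rw [show (2:ℕ) = 1 + 1 from rfl, iteratedDeriv_succ, iteratedDeriv_one]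
  have h0mem : (0:ℝ) ∈ Ioo (-1:ℝ) 1 := by norm_num
  have stepA : ∀ u ∈ Ioo (-1:ℝ) 1, |deriv ψ u| ≤ M₀ * |u| := by
    intro u hu
    have := Convex.norm_image_sub_le_of_norm_hasDerivWithin_le
      (f := deriv ψ) (f' := fun t => deriv (deriv ψ) t) (s := Ioo (-1:ℝ) 1)
      (fun t ht => ((hdiff' t ht).differentiableAt
        (hopen.mem_nhds ht)).hasDerivAt.hasDerivWithinAt)
      (fun t ht => by show |deriv (deriv ψ) t| ≤ M₀; rw [← hit]; exact hb t ht)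
      (convex_Ioo _ _) h0mem hu
    simpa [hψ'0, Real.norm_eq_abs] using this
  intro u hu
  have hsub : Icc (min 0 u) (max 0 u) ⊆ Ioo (-1:ℝ) 1 := by
    intro v hv
    constructor
    · calc (-1:ℝ) < min 0 u := by
            rcases hu with ⟨h1, h2⟩
            rcases le_total 0 u with h|h <;> simp [min_eq_left, min_eq_right, *]
      _ ≤ v := hv.1
    · calc v ≤ max 0 u := hv.2
      _ < 1 := by
            rcases hu with ⟨h1, h2⟩
            rcases le_total 0 u with h|h <;> simp [max_eq_left, max_eq_right, *]
  have h0mem' : (0:ℝ) ∈ Icc (min 0 u) (max 0 u) := ⟨min_le_left _ _, le_max_left _ _⟩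
  have humem' : u ∈ Icc (min 0 u) (max 0 u) := ⟨min_le_right _ _, le_max_right _ _⟩
  have := Convex.norm_image_sub_le_of_norm_hasDerivWithin_le
    (f := ψ) (f' := fun t => deriv ψ t) (s := Icc (min 0 u) (max 0 u))
    (fun t ht => ((hdiff t (hsub ht)).differentiableAt
      (hopen.mem_nhds (hsub ht))).hasDerivAt.hasDerivWithinAt)
    (fun t ht => by
      show |deriv ψ t| ≤ M₀ * |u|
      calc |deriv ψ t| ≤ M₀ * |t| := stepA t (hsub ht)
      _ ≤ M₀ * |u| := by
          have hM : 0 ≤ M₀ := le_trans (abs_nonneg _) (hb 0 h0mem)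
          have : |t| ≤ |u| := by
            rcases ht with ⟨h1, h2⟩
            rw [abs_le]
            constructor
            · calc -|u| ≤ min 0 u := le_min (neg_nonpos.2 (abs_nonneg u)) (neg_abs_le u)
              _ ≤ t := h1
            · calc t ≤ max 0 u := h2
              _ ≤ |u| := max_le (abs_nonneg u) (le_abs_self u)
          nlinarith)
    (convex_Icc _ _) h0mem' humem'
  have h2 : |ψ u| ≤ M₀ * |u| * |u| := by simpa [hψ0, Real.norm_eq_abs] using this
  calc |ψ u| ≤ M₀ * |u| * |u| := h2
  _ = M₀ * u^2 := by rw [mul_assoc, abs_mul_abs_self]; ring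


/-- Step 1 of the proof of Proposition 4.2 (geometric cone construction,
normalization `ρ₀ = 1`). -/
theorem cone_construction
    (M₀ : ℝ) (hM₀ : 0 < M₀) (θ₀ s χ θ₁ : ℝ)
    (hθ₀ : θ₀ = Real.arctan (1 / M₀))
    (hs : s = (5 + Real.sin θ₀ + Real.sqrt (Real.sin θ₀ ^ 2 + 30 * Real.sin θ₀ + 25)) /
      (2 * Real.sin θ₀))
    (hχ : χ = s * Real.sin θ₀ / 5)
    (hθ₁ : θ₁ = Real.arcsin (1 / s))
    (Ω : Set E2) (hΩo : IsOpen Ω) (hΩc : IsConnected Ω) (hΩb : Bornology.IsBounded Ω)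
    (hΩbd : CkOneBoundary 2 Ω 1 M₀)
    (ρ : ℝ) (hρ : 0 < ρ) (hρ₁ : ρ ≤ 1 / (16 * s))
    (x : E2) (hx : x ∈ Ω)
    (hd₁ : s * ρ < infDist x (frontier Ω)) (hd₂ : infDist x (frontier Ω) ≤ 1 / 4) :
    ∃ xt ∈ Ω, xt ≠ x ∧
      ball x (5 * χ * ρ) ⊆ cone xt (‖x - xt‖⁻¹ • (x - xt)) θ₀ ∩ ball xt (1 / 8) ∧
      cone xt (‖x - xt‖⁻¹ • (x - xt)) θ₀ ∩ ball xt (1 / 8) ⊆ Ω ∧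
      InternallyTangentCone x ρ xt (‖x - xt‖⁻¹ • (x - xt)) θ₁ ∧
      InternallyTangentCone (x + ((χ + 1) * ρ) • (‖x - xt‖⁻¹ • (x - xt))) (χ * ρ)
        xt (‖x - xt‖⁻¹ • (x - xt)) θ₁ := by
  ------------------------------------------------------------------
  -- trigonometry and algebra
  ------------------------------------------------------------------
  have hM₀' : (0:ℝ) < 1 / M₀ := by positivity
  have hcos₀ : 0 < Real.cos θ₀ := by rw [hθ₀, Real.cos_arctan]; positivity
  have htan : Real.tan θ₀ = 1 / M₀ := by rw [hθ₀, Real.tan_arctan]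
  have ht : 0 < Real.sin θ₀ := by
    have h := Real.tan_eq_sin_div_cos θ₀
    rw [htan] at h
    have h2 : Real.sin θ₀ = Real.cos θ₀ / M₀ := by
      field_simp at h ⊢; linarith
    rw [h2]; positivity
  set t := Real.sin θ₀ with htdef
  have ht1 : t ≤ 1 := Real.sin_le_one θ₀
  have hcoseq : Real.cos θ₀ = M₀ * t := by
    have h := Real.tan_eq_sin_div_cos θ₀
    rw [htan] at h
    field_simp at h
    linarith
  set R := Real.sqrt (t^2 + 30*t + 25) with hRdef
  have hR2 : R^2 = t^2 + 30*t + 25 := Real.sq_sqrt (by positivity)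
  have hR0 : 0 ≤ R := Real.sqrt_nonneg _
  have hR5 : 5 ≤ R := arithA hR2 hR0 ht
  have hst : s * (2*t) = 5 + t + R := by rw [hs]; field_simp
  have hs2 : 2 ≤ s := arithB hst ht ht1 hR5
  have hs0 : 0 < s := by linarith
  have h5χ : 5 * χ = s * t := by rw [hχ]; ring
  have hχpos : 0 < χ := by rw [hχ]; positivity
  have hχeq : s * χ = s + χ + 1 := by
    have hc := arithC ht hst hR2 hR5 hs2
    have e1 : 5 * (s*χ) = s * (s * t) := by rw [← h5χ]; ring
    linarith
  have hsinθ₁ : Real.sin θ₁ = 1/s := by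
    rw [hθ₁, Real.sin_arcsin]
    · have h0 : (0:ℝ) < 1/s := by positivity
      linarith
    · rw [div_le_one hs0]; linarith
  have hcosθ₁ : 0 ≤ Real.cos θ₁ := by
    rw [hθ₁, Real.cos_arcsin]; positivity
  have hsρ : 0 < s * ρ := by positivity
  have hsρ16 : s * ρ ≤ 1/16 := by
    calc s * ρ ≤ s * (1 / (16*s)) := by
          exact mul_le_mul_of_nonneg_left hρ₁ (le_of_lt hs0)
    _ = 1/16 := by field_simp; try ring
  ------------------------------------------------------------------
  -- the closest boundary point and the chart
  ------------------------------------------------------------------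
  set d := infDist x (frontier Ω) with hddef
  have hd0 : 0 < d := lt_trans hsρ hd₁
  have hfne : (frontier Ω).Nonempty := by
    by_contra h
    rw [not_nonempty_iff_eq_empty] at h
    have hclopen : IsClopen Ω := isClopen_iff_frontier_eq_empty.2 h
    haveI : PreconnectedSpace E2 := ⟨(convex_univ : Convex ℝ (univ : Set E2)).isPreconnected⟩
    rcases isClopen_iff.1 hclopen with h'|h'
    · rw [h'] at hx; exact hx
    · rw [h'] at hΩb
      rcases (isBounded_iff_forall_norm_le.1 hΩb) with ⟨C, hC⟩
      have := hC ((C+1) • e2 0) (mem_univ _)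
      rw [norm_smul] at this
      have he : ‖e2 0‖ = 1 := by simp [e2]
      rw [he] at this
      simp at this
      cases abs_cases (C+1) <;> linarith
  obtain ⟨P, hPf, hPd⟩ := isClosed_frontier.exists_infDist_eq_dist hfne x
  obtain ⟨f, ψ, hfP, hset, hψ0, hψ'0, hψC, L, b, hLip, hbnd, hsum⟩ := hΩbd P hPf
  have hψ'0' : deriv ψ 0 = 0 := hψ'0 (by norm_num)
  have h0Ioo : (0:ℝ) ∈ Ioo (-1:ℝ) 1 := by norm_num
  -- the second derivative bound
  have hbm : ∀ m ∈ Finset.range 3, 0 ≤ b m := fun m hm =>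
    le_trans (abs_nonneg _) (hbnd m hm 0 h0Ioo)
  have hb2M : ∀ u ∈ Ioo (-1:ℝ) 1, |iteratedDeriv 2 ψ u| ≤ M₀ := by
    intro u hu
    have h0 := hbm 0 (by norm_num)
    have h1 := hbm 1 (by norm_num)
    have hL : (0:ℝ) ≤ L := L.2
    have hsum' : b 0 + b 1 + b 2 + (L:ℝ) ≤ M₀ := by
      simpa [Finset.sum_range_succ] using hsum
    calc |iteratedDeriv 2 ψ u| ≤ b 2 := hbnd 2 (by norm_num) u hu
    _ ≤ M₀ := by linarith
  have hψbd : ∀ u ∈ Ioo (-1:ℝ) 1, |ψ u| ≤ M₀ * u^2 :=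
    psi_bound ψ hψ0 hψ'0' hψC hb2M
  ------------------------------------------------------------------
  -- membership criterion through the chart
  ------------------------------------------------------------------
  have hcoord : ∀ (w : E2) (i : Fin 2), (inner ℝ w (e2 i) : ℝ) = w i := by
    intro w i
    simp [e2, EuclideanSpace.inner_single_right]
  have hmem_iff : ∀ w : E2, ‖w‖ < 1 → (f.symm w ∈ Ω ↔ ψ (w 0) < w 1) := by
    intro w hw
    have hwb : w ∈ ball (0:E2) 1 := by rwa [mem_ball, dist_zero_right]
    constructor
    · intro h
      have hmem : w ∈ f '' Ω ∩ ball (0:E2) 1 :=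
        ⟨⟨f.symm w, h, f.apply_symm_apply w⟩, hwb⟩
      rw [hset] at hmem
      have := hmem.2
      rwa [hcoord, hcoord] at this
    · intro h
      have hmem : w ∈ {y ∈ ball (0:E2) 1 | ψ ((inner ℝ y (e2 0) : ℝ)) < (inner ℝ y (e2 1) : ℝ)} :=
        ⟨hwb, by rwa [hcoord, hcoord]⟩
      rw [← hset] at hmem
      obtain ⟨⟨z, hz, hzw⟩, -⟩ := hmem
      have : f.symm w = z := by rw [← hzw, f.symm_apply_apply]
      rwa [this]
  ------------------------------------------------------------------
  -- the chart image of x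
  ------------------------------------------------------------------
  set X := f x with hXdef
  have hXnorm : ‖X‖ = d := by
    rw [← dist_zero_right, ← hfP, f.isometry.dist_eq, ← hPd]
  have hXball : ‖X‖ < 1 := by rw [hXnorm]; linarith
  have hXmem : ψ (X 0) < X 1 := by
    have hxX : f.symm X = x := f.symm_apply_apply x
    exact (hmem_iff X hXball).1 (by rwa [hxX])
  have hXsq : X 0^2 + X 1^2 = d^2 := by rw [← norm_sq_coord, hXnorm]
  ------------------------------------------------------------------
  -- the graph points are on the frontier
  ------------------------------------------------------------------
  have hγcoord0 : ∀ u : ℝ, (EuclideanSpace.single 0 u + EuclideanSpace.single 1 (ψ u) : E2) 0 = u := by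
    intro u; simp [PiLp.add_apply, EuclideanSpace.single_apply]
  have hγcoord1 : ∀ u : ℝ, (EuclideanSpace.single 0 u + EuclideanSpace.single 1 (ψ u) : E2) 1 = ψ u := by
    intro u; simp [PiLp.add_apply, EuclideanSpace.single_apply]
  have hγfrontier : ∀ u : ℝ,
      ‖(EuclideanSpace.single 0 u + EuclideanSpace.single 1 (ψ u) : E2)‖ < 1 →
      f.symm (EuclideanSpace.single 0 u + EuclideanSpace.single 1 (ψ u)) ∈ frontier Ω := by
    intro u hu
    set γ : E2 := EuclideanSpace.single 0 u + EuclideanSpace.single 1 (ψ u) with hγdef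
    rw [hΩo.frontier_eq]
    constructor
    · -- in the closure
      set c : ℝ := (1 - ‖γ‖)/2 with hcdef
      have hc : 0 < c := by rw [hcdef]; linarith
      have hseq : ∀ n : ℕ, f.symm (γ + (c * (1/(n+1))) • e2 1) ∈ Ω := by
        intro n
        have hn1 : (0:ℝ) < 1/((n:ℝ)+1) := by positivity
        have hn2 : (1:ℝ)/((n:ℝ)+1) ≤ 1 := by
          rw [div_le_one (by positivity)]
          simp
        have hδ : 0 < c * (1/((n:ℝ)+1)) := by positivity
        have hδc : c * (1/((n:ℝ)+1)) ≤ c := mul_le_of_le_one_right hc.le hn2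
        have hnorm : ‖γ + (c * (1/((n:ℝ)+1))) • e2 1‖ < 1 := by
          calc ‖γ + (c * (1/((n:ℝ)+1))) • e2 1‖ ≤ ‖γ‖ + ‖(c * (1/((n:ℝ)+1))) • e2 1‖ :=
                norm_add_le _ _
          _ = ‖γ‖ + c * (1/((n:ℝ)+1)) := by
                rw [norm_smul]
                simp [e2]
                rw [abs_of_pos hc, abs_of_pos (show (0:ℝ) < (n:ℝ)+1 by positivity)]
          _ ≤ ‖γ‖ + c := by linarith
          _ < 1 := by rw [hcdef]; linarith
        apply (hmem_iff _ hnorm).2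
        have hco0 : (γ + (c * (1/((n:ℝ)+1))) • e2 1) 0 = u := by
          simp [hγdef, e2, PiLp.add_apply, PiLp.smul_apply, EuclideanSpace.single_apply]
        have hco1 : (γ + (c * (1/((n:ℝ)+1))) • e2 1) 1 = ψ u + c * (1/((n:ℝ)+1)) := by
          simp [hγdef, e2, PiLp.add_apply, PiLp.smul_apply, EuclideanSpace.single_apply]
        rw [hco0, hco1]
        linarith
      have htend : Filter.Tendsto (fun n : ℕ => f.symm (γ + (c * (1/((n:ℝ)+1))) • e2 1))
          Filter.atTop (𝓝 (f.symm γ)) := by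
        apply Filter.Tendsto.comp (f.symm.continuous.tendsto _)
        have h1 : Filter.Tendsto (fun n : ℕ => c * (1/((n:ℝ)+1))) Filter.atTop (𝓝 0) := by
          have h0 := tendsto_one_div_add_atTop_nhds_zero_nat (𝕜 := ℝ)
          have h2 := h0.const_mul c
          simpa using h2
        have h2 : Filter.Tendsto (fun n : ℕ => (c * (1/((n:ℝ)+1))) • e2 1)
            Filter.atTop (𝓝 (0:E2)) := by
          have h3 := h1.smul_const (e2 1)
          simpa using h3
        have h3 := h2.const_add γ
        simpa using h3
      exact mem_closure_of_tendsto htend (Filter.Eventually.of_forall hseq)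
    · -- not in Ω
      intro hmem
      have := (hmem_iff γ hu).1 hmem
      rw [hγdef, hγcoord0, hγcoord1] at this
      exact lt_irrefl _ this
  ------------------------------------------------------------------
  -- X 0 = 0, X 1 = d
  ------------------------------------------------------------------
  have hX1le : |X 1| ≤ d := arithD hd0.le hXsq
  set t₀ : ℝ := min (1/2) (1/(2*M₀)) with ht₀def
  have ht₀ : 0 < t₀ := lt_min (by norm_num) (by positivity)
  have hkey : ∀ u : ℝ, |u| ≤ t₀ → 2 * (X 0) * u ≤ (2 + M₀) * u^2 := by
    intro u hu
    rcases eq_or_ne u 0 with rfl|hu0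
    · simp
    have huabs : 0 < |u| := abs_pos.2 hu0
    have hu12 : |u| ≤ 1/2 := le_trans hu (min_le_left _ _)
    have huM : |u| ≤ 1/(2*M₀) := le_trans hu (min_le_right _ _)
    have huIoo : u ∈ Ioo (-1:ℝ) 1 :=
      ⟨by linarith [neg_abs_le u], by linarith [le_abs_self u]⟩
    have hψu : |ψ u| ≤ M₀ * u^2 := hψbd u huIoo
    have hψu2 : |ψ u| ≤ |u|/2 := by
      calc |ψ u| ≤ M₀ * u^2 := hψu
      _ = (M₀ * |u|) * |u| := by rw [mul_assoc, abs_mul_abs_self]; ring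
      _ ≤ (M₀ * (1/(2*M₀))) * |u| := by
            apply mul_le_mul_of_nonneg_right _ (abs_nonneg u)
            exact mul_le_mul_of_nonneg_left huM (le_of_lt hM₀)
      _ = |u|/2 := by field_simp
    set γ : E2 := EuclideanSpace.single 0 u + EuclideanSpace.single 1 (ψ u) with hγdef
    have hγnormsq : ‖γ‖^2 = u^2 + (ψ u)^2 := by
      rw [norm_sq_coord, hγdef, hγcoord0, hγcoord1]
    have hγnorm : ‖γ‖ < 1 := arithE (norm_nonneg γ) hγnormsq hu12 hψu2
    have hQ := hγfrontier u hγnorm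
    have hdist : d ≤ dist x (f.symm γ) := by
      rw [hddef]; exact infDist_le_dist_of_mem hQ
    have hdist2 : dist x (f.symm γ) = dist X γ := by
      have : x = f.symm X := (f.symm_apply_apply x).symm
      rw [this, f.symm.isometry.dist_eq]
    have hdsq : d^2 ≤ (X 0 - u)^2 + (X 1 - ψ u)^2 := by
      have h1 : dist X γ = ‖X - γ‖ := dist_eq_norm _ _
      have h2 : ‖X - γ‖^2 = (X 0 - u)^2 + (X 1 - ψ u)^2 := by
        rw [norm_sq_coord]
        have e0 : (X - γ) 0 = X 0 - u := by
          simp [hγdef, PiLp.sub_apply, PiLp.add_apply, EuclideanSpace.single_apply]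
        have e1 : (X - γ) 1 = X 1 - ψ u := by
          simp [hγdef, PiLp.sub_apply, PiLp.add_apply, EuclideanSpace.single_apply]
        rw [e0, e1]
      have hdd : d ≤ dist X γ := by rw [← hdist2]; exact hdist
      have h3 : d^2 ≤ (dist X γ)^2 := pow_le_pow_left₀ hd0.le hdd 2
      rw [h1, h2] at h3
      exact h3
    have hX1d : |X 1| ≤ 1/4 := le_trans hX1le hd₂
    exact arithF hM₀ hX1d hψu hψu2 hXsq hdsq
  have hX0 : X 0 = 0 := by
    by_contra h
    have ha : 0 < |X 0| := abs_pos.2 h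
    set u := min t₀ (|X 0|/(2+M₀)) with hudef
    have hu0 : 0 < u := lt_min ht₀ (by positivity)
    have hut₀ : u ≤ t₀ := min_le_left _ _
    have huX : u ≤ |X 0|/(2+M₀) := min_le_right _ _
    have h1 := hkey u (by rwa [abs_of_pos hu0])
    have h2 := hkey (-u) (by rwa [abs_neg, abs_of_pos hu0])
    have hC : (0:ℝ) < 2 + M₀ := by linarith
    have h3 : (2+M₀) * u ≤ |X 0| := by
      rw [le_div_iff₀ hC] at huX
      linarith
    exact arithG hu0 hC h1 h2 h3 h
  have hX1 : X 1 = d := by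
    have h1 : 0 < X 1 := by
      have := hXmem
      rw [hX0, hψ0] at this
      exact this
    apply eq_of_sq_eq_sq'' (le_of_lt h1) hd0
    linear_combination hXsq - X 0 * hX0
  ------------------------------------------------------------------
  -- construction of x̃
  ------------------------------------------------------------------
  set V : E2 := X - (s*ρ) • e2 1 with hVdef
  have hV0 : V 0 = 0 := by simp [hVdef, e2, PiLp.sub_apply, PiLp.smul_apply, EuclideanSpace.single_apply, hX0]
  have hV1 : V 1 = d - s*ρ := by simp [hVdef, e2, PiLp.sub_apply, PiLp.smul_apply, EuclideanSpace.single_apply, hX1]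
  have hVnorm : ‖V‖ = d - s*ρ := by
    apply eq_of_sq_eq_sq'' (norm_nonneg V) (by linarith)
    rw [norm_sq_coord, hV0, hV1]; ring
  have hVball : ‖V‖ < 1 := by rw [hVnorm]; linarith
  set xt : E2 := f.symm V with hxtdef
  have hxtΩ : xt ∈ Ω := by
    apply (hmem_iff V hVball).2
    rw [hV0, hV1, hψ0]
    linarith
  have hfxt : f xt = V := f.apply_symm_apply V
  have hXV : X - V = (s*ρ) • e2 1 := by rw [hVdef]; abel
  have hdxxt : dist x xt = s*ρ := by
    rw [← f.isometry.dist_eq, hfxt, ← hXdef, dist_eq_norm, hXV, norm_smul]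
    simp [e2]
    rw [abs_of_pos hs0, abs_of_pos hρ]
  have hnormxxt : ‖x - xt‖ = s*ρ := by rw [← dist_eq_norm]; exact hdxxt
  have hxtne : xt ≠ x := by
    intro h
    rw [h] at hdxxt
    simp at hdxxt
    rcases hdxxt with h'|h' <;> linarith
  set ξ : E2 := ‖x - xt‖⁻¹ • (x - xt) with hξdef
  have hξnorm : ‖ξ‖ = 1 := by
    rw [hξdef, norm_smul, hnormxxt, Real.norm_eq_abs,
      abs_of_pos (show (0:ℝ) < (s*ρ)⁻¹ by positivity)]
    exact inv_mul_cancel₀ (ne_of_gt hsρ)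
  have hxeq : x = xt + (s*ρ) • ξ := by
    rw [hξdef, hnormxxt, smul_smul]
    rw [mul_inv_cancel₀ (ne_of_gt hsρ), one_smul]
    abel
  -- inner product transfer
  have hinner : ∀ y : E2, (inner ℝ ξ (y - xt) : ℝ) = (f y) 1 - (d - s*ρ) := by
    intro y
    rw [hξdef, real_inner_smul_left, hnormxxt]
    have h1 : (inner ℝ (x - xt) (y - xt) : ℝ) = (inner ℝ (X - V) (f y - V) : ℝ) := by
      rw [← isom_inner f x xt y, hfxt, ← hXdef]
    rw [h1, hXV, real_inner_smul_left]
    have h2 : (inner ℝ (e2 1) (f y - V) : ℝ) = (f y - V) 1 := by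
      rw [real_inner_comm]; exact hcoord _ 1
    rw [h2]
    have h3 : (f y - V) 1 = (f y) 1 - (d - s*ρ) := by
      simp [PiLp.sub_apply, hV1]
    rw [h3]
    field_simp
  have hdistyxt : ∀ y : E2, dist y xt = ‖f y - V‖ := by
    intro y
    rw [← f.isometry.dist_eq, hfxt, dist_eq_norm]
  ------------------------------------------------------------------
  -- the conclusions
  ------------------------------------------------------------------
  refine ⟨xt, hxtΩ, hxtne, ?_, ?_, ?_, ?_⟩
  · -- ball x (5χρ) ⊆ cone ∩ ball
    intro y hy
    constructor
    · have hsub : ball x (5*χ*ρ) ⊆ cone xt ξ θ₀ := by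
        rw [hxeq]
        apply ball_subset_cone xt ξ hξnorm hsρ (le_of_lt hcos₀)
        rw [show (5:ℝ)*χ*ρ = (5*χ)*ρ by ring, h5χ]
        exact le_of_eq (by ring)
      exact hsub hy
    · rw [mem_ball] at hy ⊢
      have h5χρ : 5*χ*ρ ≤ s*ρ := by
        rw [show (5:ℝ)*χ*ρ = (5*χ)*ρ by ring, h5χ]
        have h := mul_le_mul_of_nonneg_left ht1 hs0.le
        have h2 := mul_le_mul_of_nonneg_right h hρ.le
        calc s*t*ρ ≤ s*1*ρ := h2
        _ = s*ρ := by ring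
      calc dist y xt ≤ dist y x + dist x xt := dist_triangle _ _ _
      _ < 5*χ*ρ + s*ρ := by rw [hdxxt]; linarith
      _ ≤ 1/16 + 1/16 := by linarith
      _ ≤ 1/8 := by norm_num
  · -- cone ∩ ball ⊆ Ω
    rintro y ⟨hyc, hyb⟩
    have hY := hinner y
    set Y := f y with hYdef
    have hycone : Real.cos θ₀ * ‖y - xt‖ < Y 1 - (d - s*ρ) := by
      have := hyc
      change cone xt ξ θ₀ y at this
      calc Real.cos θ₀ * ‖y - xt‖ < (inner ℝ ξ (y - xt) : ℝ) := this
      _ = Y 1 - (d - s*ρ) := hY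
    set h : ℝ := Y 1 - (d - s*ρ) with hhdef
    have hnyxt : ‖y - xt‖ = ‖Y - V‖ := by
      rw [← dist_eq_norm, hdistyxt y]
    have hYVsq : ‖Y - V‖^2 = (Y 0)^2 + h^2 := by
      rw [norm_sq_coord]
      have e0 : (Y - V) 0 = Y 0 := by simp [PiLp.sub_apply, hV0]
      have e1 : (Y - V) 1 = h := by simp [PiLp.sub_apply, hV1, hhdef]
      rw [e0, e1]
    have hh0 : 0 < h :=
      lt_of_le_of_lt (mul_nonneg hcos₀.le (norm_nonneg _)) hycone
    have hcone2 : (M₀*t)^2 * ((Y 0)^2 + h^2) < h^2 := by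
      have hsq1 := arithK (mul_nonneg hcos₀.le (norm_nonneg (y - xt))) hycone
      calc (M₀*t)^2 * ((Y 0)^2 + h^2) = (Real.cos θ₀ * ‖y - xt‖)^2 := by
            have e : ((M₀*t) * ‖Y - V‖)^2 = (M₀*t)^2 * ((Y 0)^2 + h^2) := by
              rw [mul_pow, hYVsq]
            rw [hcoseq, hnyxt, e]
      _ < h^2 := hsq1
    have hpyth : t^2 + (M₀*t)^2 = 1 := by
      rw [← hcoseq]
      exact Real.sin_sq_add_cos_sq θ₀
    have hMuh : M₀ * |Y 0| < h := arithH ht hh0 hM₀ hcone2 hpyth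
    have hYV8 : ‖Y - V‖ < 1/8 := by
      rw [← hnyxt, ← dist_eq_norm]
      exact hyb
    have hY0abs : |Y 0| ≤ ‖Y - V‖ := arithI (norm_nonneg _) hYVsq
    have hY0small : |Y 0| < 1/8 := lt_of_le_of_lt hY0abs hYV8
    have hYnorm : ‖Y‖ < 1 := by
      calc ‖Y‖ = ‖V + (Y - V)‖ := by rw [add_sub_cancel]
      _ ≤ ‖V‖ + ‖Y - V‖ := norm_add_le _ _
      _ < (d - s*ρ) + 1/8 := by rw [hVnorm]; linarith
      _ < 1 := by linarith
    have hY0Ioo : Y 0 ∈ Ioo (-1:ℝ) 1 :=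
      ⟨by linarith [neg_abs_le (Y 0)], by linarith [le_abs_self (Y 0)]⟩
    have hψY : ψ (Y 0) < Y 1 := by
      have h1 : |ψ (Y 0)| ≤ M₀ * (Y 0)^2 := hψbd (Y 0) hY0Ioo
      have h2 : M₀ * (Y 0)^2 ≤ M₀ * |Y 0| := arithJ hM₀ (by linarith)
      have h3 : ψ (Y 0) ≤ |ψ (Y 0)| := le_abs_self _
      have : Y 1 = (d - s*ρ) + h := by rw [hhdef]; ring
      rw [this]
      have hds : 0 < d - s*ρ := by linarith
      linarith
    have : f.symm Y ∈ Ω := (hmem_iff Y hYnorm).2 hψY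
    rwa [hYdef, f.symm_apply_apply] at this
  · -- first tangent disc
    constructor
    · show ball x ρ ⊆ cone xt ξ θ₁
      have hsub : ball (xt + (s*ρ) • ξ) ρ ⊆ cone xt ξ θ₁ := by
        apply ball_subset_cone xt ξ hξnorm hsρ hcosθ₁
        rw [hsinθ₁]
        apply le_of_eq
        field_simp
      rwa [← hxeq] at hsub
    · show ρ = Real.sin θ₁ * ‖x - xt‖
      rw [hnormxxt, hsinθ₁]
      field_simp
  · -- second tangent disc
    have hc₂ : x + ((χ + 1) * ρ) • ξ = xt + ((s + χ + 1)*ρ) • ξ := by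
      rw [hxeq, add_assoc, ← add_smul]
      ring_nf
    have hD₂pos : 0 < (s + χ + 1)*ρ := by positivity
    constructor
    · show ball (x + ((χ + 1) * ρ) • ξ) (χ*ρ) ⊆ cone xt ξ θ₁
      have hsub : ball (xt + ((s + χ + 1)*ρ) • ξ) (χ*ρ) ⊆ cone xt ξ θ₁ := by
        apply ball_subset_cone xt ξ hξnorm hD₂pos hcosθ₁
        rw [hsinθ₁]
        apply le_of_eq
        rw [show s + χ + 1 = s * χ from hχeq.symm]
        field_simp
      rwa [← hc₂] at hsub
    · show χ*ρ = Real.sin θ₁ * ‖x + ((χ + 1) * ρ) • ξ - xt‖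
      rw [show x + ((χ + 1) * ρ) • ξ - xt = ((s + χ + 1)*ρ) • ξ from by rw [hc₂]; abel,
        norm_smul, hξnorm, hsinθ₁, Real.norm_eq_abs, abs_of_pos hD₂pos, mul_one,
        show s + χ + 1 = s * χ from hχeq.symm]
      field_simp


end
end

section
/- Bounds on the chain length and final radius: Define k(ρ) = [log{((χ−1)/(6χ−4))(h₀/(8ρ) − s + 1 + 2/(χ−1))}/logχ] + 1 and r_{k(ρ)} = χ^{k(ρ)−1}ρ. If ρ ≤ ρ̄ = min{1/(16s), 1/(8(6χ+s+1)), h₀/(16s), (χ−1)h₀/16}, then k(ρ) ≥ log(τ/ρ)/logχ with τ = (χ−1)h₀/(16(6χ−4)), k(ρ) ≤ log(h₀/(20ρ))/logχ + 1, and consequently τ/χ ≤ r_{k(ρ)} ≤ h₀/20. -/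
noncomputable section

open MeasureTheory Metric Set
open scoped ENNReal NNReal Topology

set_option maxHeartbeats 800000 in
/-- Bounds (5.15)-(5.17) on the chain length `k(ρ)` and the final radius
`r_{k(ρ)} = χ^{k(ρ)-1} ρ`. -/
theorem chain_length_and_radius_bounds
    (M₀ θ₀ s χ h₀ ρ : ℝ) (hM₀ : 0 < M₀)
    (hθ₀ : θ₀ = Real.arctan (1 / M₀))
    (hs : s = (5 + Real.sin θ₀ + Real.sqrt (Real.sin θ₀ ^ 2 + 30 * Real.sin θ₀ + 25)) /
      (2 * Real.sin θ₀))
    (hχ : χ = s * Real.sin θ₀ / 5)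
    (hh₀ : 0 < h₀) (hh₀' : h₀ < 1) (hρ : 0 < ρ)
    (hρbar : ρ ≤ min (min (1 / (16 * s)) (1 / (8 * (6 * χ + s + 1))))
      (min (h₀ / (16 * s)) ((χ - 1) * h₀ / 16))) :
    Real.log ((χ - 1) * h₀ / (16 * (6 * χ - 4)) / ρ) / Real.log χ ≤ (kOfρ χ s h₀ ρ : ℝ) ∧
      (kOfρ χ s h₀ ρ : ℝ) ≤ Real.log (h₀ / (20 * ρ)) / Real.log χ + 1 ∧
      (χ - 1) * h₀ / (16 * (6 * χ - 4)) / χ ≤ χ ^ (kOfρ χ s h₀ ρ - 1) * ρ ∧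
      χ ^ (kOfρ χ s h₀ ρ - 1) * ρ ≤ h₀ / 20 := by
  have ht : 0 < Real.sin θ₀ := by
    rw [hθ₀, Real.sin_arctan]
    exact div_pos (one_div_pos.mpr hM₀) (Real.sqrt_pos.mpr (by positivity))
  set t := Real.sin θ₀ with htdef
  have hD : (0:ℝ) ≤ t ^ 2 + 30 * t + 25 := by positivity
  have hsqnn : 0 ≤ Real.sqrt (t ^ 2 + 30 * t + 25) := Real.sqrt_nonneg _
  have hsq : Real.sqrt (t ^ 2 + 30 * t + 25) ^ 2 = t ^ 2 + 30 * t + 25 := Real.sq_sqrt hD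
  have hs2 : 2 * t * s = 5 + t + Real.sqrt (t ^ 2 + 30 * t + 25) := by
    rw [hs]; field_simp
  have h3 : (2 * t * s - 5 - t) ^ 2 = t ^ 2 + 30 * t + 25 := by
    rw [show 2 * t * s - 5 - t = Real.sqrt (t ^ 2 + 30 * t + 25) by linarith]; exact hsq
  have hquad : t * s ^ 2 = (5 + t) * s + 5 := by
    have h5 : 4 * t * (t * s ^ 2) = 4 * t * ((5 + t) * s + 5) := by linear_combination h3
    have := mul_left_cancel₀ (show (4 * t) ≠ 0 by positivity) h5
    linarith
  have hspos : 0 < s := by nlinarith [hs2, hsqnn, ht]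
  have hχ1 : 1 < χ := by rw [hχ]; nlinarith [hquad, hspos, ht]
  have hχpos : 0 < χ := by linarith
  have h6χ : 0 < 6 * χ - 4 := by linarith
  have hχm1 : 0 < χ - 1 := by linarith
  have hlogχ : 0 < Real.log χ := Real.log_pos hχ1
  have hrel : s * (χ - 1) = χ + 1 := by rw [hχ]; linear_combination hquad / 5
  set A : ℝ := (χ - 1) * h₀ / (8 * (6 * χ - 4)) with hAdef
  have hA : 0 < A := div_pos (mul_pos hχm1 hh₀) (by linarith)
  have harg : (χ - 1) / (6 * χ - 4) * (h₀ / (8 * ρ) - s + 1 + 2 / (χ - 1)) = A / ρ := by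
    have hzero : h₀ / (8 * ρ) - s + 1 + 2 / (χ - 1) = h₀ / (8 * ρ) := by
      field_simp
      linear_combination (-8 * ρ) * hrel
    rw [hzero, hAdef]
    field_simp
  set x : ℝ := Real.log (A / ρ) / Real.log χ with hxdef
  have hk : kOfρ χ s h₀ ρ = ⌊x⌋ + 1 := by unfold kOfρ; rw [harg]
  have hAρ : 0 < A / ρ := div_pos hA hρ
  have hχx : χ ^ x = A / ρ := by
    rw [Real.rpow_def_of_pos hχpos,
      show Real.log χ * x = Real.log (A / ρ) by rw [hxdef]; field_simp,
      Real.exp_log hAρ]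
  have hτA : (χ - 1) * h₀ / (16 * (6 * χ - 4)) ≤ A := by
    rw [hAdef, div_le_div_iff₀ (by linarith) (by linarith)]
    nlinarith [mul_pos (mul_pos hχm1 hh₀) h6χ]
  have hτpos : 0 < (χ - 1) * h₀ / (16 * (6 * χ - 4)) := div_pos (mul_pos hχm1 hh₀) (by linarith)
  have hAh : A ≤ h₀ / 20 := by
    rw [hAdef, div_le_div_iff₀ (by linarith) (by norm_num)]
    nlinarith [mul_pos hχm1 hh₀, mul_pos hχpos hh₀]
  have hfloorx : (⌊x⌋ : ℝ) ≤ x := Int.floor_le x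
  have hfloorx' : x - 1 ≤ (⌊x⌋ : ℝ) := by linarith [Int.sub_one_lt_floor x]
  have hzr : (χ : ℝ) ^ (kOfρ χ s h₀ ρ - 1) = χ ^ ((⌊x⌋ : ℝ)) := by
    rw [hk, add_sub_cancel_right, ← Real.rpow_intCast]
  have hub : χ ^ ((⌊x⌋ : ℝ)) ≤ A / ρ := by
    rw [← hχx]; exact Real.rpow_le_rpow_of_exponent_le hχ1.le hfloorx
  have hlb : A / ρ / χ ≤ χ ^ ((⌊x⌋ : ℝ)) := by
    have : χ ^ (x - 1) = A / ρ / χ := by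
      rw [Real.rpow_sub hχpos, Real.rpow_one, hχx]
    rw [← this]; exact Real.rpow_le_rpow_of_exponent_le hχ1.le hfloorx'
  refine ⟨?_, ?_, ?_, ?_⟩
  · rw [hk]
    push_cast
    have h1 : Real.log ((χ - 1) * h₀ / (16 * (6 * χ - 4)) / ρ) ≤ Real.log (A / ρ) := by
      apply Real.log_le_log (div_pos hτpos hρ)
      gcongr
    have h2 : Real.log ((χ - 1) * h₀ / (16 * (6 * χ - 4)) / ρ) / Real.log χ ≤ x := by
      rw [hxdef]; gcongr
    linarith [Int.lt_floor_add_one x]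
  · rw [hk]
    push_cast
    have h1 : Real.log (A / ρ) ≤ Real.log (h₀ / (20 * ρ)) := by
      apply Real.log_le_log hAρ
      rw [show h₀ / (20 * ρ) = (h₀ / 20) / ρ by ring]
      gcongr
    have h2 : x ≤ Real.log (h₀ / (20 * ρ)) / Real.log χ := by rw [hxdef]; gcongr
    linarith
  · rw [hzr]
    have : A / ρ / χ * ρ = A / χ := by field_simp
    calc (χ - 1) * h₀ / (16 * (6 * χ - 4)) / χ ≤ A / χ := by gcongr
      _ = A / ρ / χ * ρ := this.symm
      _ ≤ χ ^ ((⌊x⌋ : ℝ)) * ρ := by gcongr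
  · rw [hzr]
    calc χ ^ ((⌊x⌋ : ℝ)) * ρ ≤ A / ρ * ρ := by gcongr
      _ = A := by field_simp
      _ ≤ h₀ / 20 := hAh

end
end
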